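/- With notation as above, the map E_δ(a) = Σ_{j=1}^{n+1} (1-p_{j-1}) pⱼ a (1-p_{j-1}) is a linear idempotent map from A onto Δ(δ) with kernel TN(δ̂) = {a : pⱼ a (1-p_{j-1}) = 0 ∀j}, and E_δ(1) = 1. -/

import Mathlib

/-! The differences `q i = p (i + 1) - p i`, `i = 0, …, n`, form a complete family of orthogonal
idempotents, with `p j = ∑_{i < j} q i` and `1 - p j = ∑_{i ≥ j} q i`. Every `a` is the sum of its
blocks `q i * a * q k`, and `E_δ` keeps exactly the blocks with `i ≤ k`: it is the projection onto
block upper triangular elements. In these terms `Δ(δ)` consists of the elements with no block below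
the diagonal, and `TN(δ̂)` of those with no block on or above it. -/

/-- The projection `E_δ` onto `Δ(δ)` along `TN(δ̂)`. -/
def Edel {A : Type*} [Ring A] (n : ℕ) (p : ℕ → A) (a : A) : A :=
  ∑ j ∈ Finset.Icc 1 (n + 1), (1 - p (j - 1)) * p j * a * (1 - p (j - 1))

namespace OrthogonalIdempotents

variable {R I : Type*} [Semiring R] {e : I → R}

lemma sum_mul_of_mem (he : OrthogonalIdempotents e) {i : I} {s : Finset I} (h : i ∈ s) :
    (∑ j ∈ s, e j) * e i = e i := by
  classical
  simp [Finset.sum_mul, he.mul_eq, h]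

lemma sum_mul_mul_sum_eq_zero_iff (he : OrthogonalIdempotents e) {s t : Finset I} {a : R} :
    (∑ i ∈ s, e i) * a * ∑ k ∈ t, e k = 0 ↔ ∀ i ∈ s, ∀ k ∈ t, e i * a * e k = 0 := by
  refine ⟨fun h i hi k hk => ?_, fun h => ?_⟩
  · calc e i * a * e k = (e i * ∑ i ∈ s, e i) * a * ((∑ k ∈ t, e k) * e k) := by
          rw [he.mul_sum_of_mem hi, he.sum_mul_of_mem hk]
      _ = e i * ((∑ i ∈ s, e i) * a * ∑ k ∈ t, e k) * e k := by simp only [mul_assoc]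
      _ = 0 := by rw [h, mul_zero, zero_mul]
  · simp only [Finset.sum_mul, Finset.mul_sum]
    exact Finset.sum_eq_zero fun k hk => Finset.sum_eq_zero fun i hi => h i hi k hk

end OrthogonalIdempotents

theorem CompleteOrthogonalIdempotents.ext_of_mul_mul {R I : Type*} [Semiring R] [Fintype I]
    {e : I → R} (he : CompleteOrthogonalIdempotents e) {a b : R}
    (h : ∀ i k, e i * a * e k = e i * b * e k) : a = b := by
  have hdecomp : ∀ x : R, x = ∑ i, ∑ k, e i * x * e k := fun x => by
    simp only [← Finset.mul_sum, ← Finset.sum_mul, he.complete, one_mul, mul_one]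
  rw [hdecomp a, hdecomp b]
  simp only [h]

section UpperTriangularPart

variable {R I : Type*} [Semiring R] [Fintype I] [LinearOrder I] {e : I → R}

def upperTriangularPart (e : I → R) (a : R) : R :=
  ∑ i, ∑ k, if i ≤ k then e i * a * e k else 0

lemma upperTriangularPart_add (e : I → R) (a b : R) :
    upperTriangularPart e (a + b) = upperTriangularPart e a + upperTriangularPart e b := by
  simp only [upperTriangularPart, ← Finset.sum_add_distrib, ← ite_add_zero, mul_add, add_mul]

lemma OrthogonalIdempotents.mul_upperTriangularPart_mul (he : OrthogonalIdempotents e)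
    (a : R) (i k : I) :
    e i * upperTriangularPart e a * e k = if i ≤ k then e i * a * e k else 0 := by
  classical
  have hblock : ∀ i' k', e i * (e i' * a * e k') * e k = e i * e i' * a * (e k' * e k) := by
    intro i' k'; simp only [mul_assoc]
  simp only [upperTriangularPart, Finset.mul_sum, Finset.sum_mul, mul_ite, ite_mul, mul_zero,
    zero_mul, hblock, he.mul_eq]
  rw [Finset.sum_eq_single i (fun x _ hx => by simp [Ne.symm hx]) (by simp),
    Finset.sum_eq_single k (fun x _ hx => by simp [hx]) (by simp)]
  simp

namespace CompleteOrthogonalIdempotents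

variable (he : CompleteOrthogonalIdempotents e)
include he

lemma upperTriangularPart_idem (a : R) :
    upperTriangularPart e (upperTriangularPart e a) = upperTriangularPart e a :=
  he.ext_of_mul_mul fun i k => by
    simp only [he.mul_upperTriangularPart_mul]
    split_ifs <;> rfl

lemma upperTriangularPart_eq_self_iff {a : R} :
    upperTriangularPart e a = a ↔ ∀ i k, k < i → e i * a * e k = 0 := by
  refine ⟨fun h i k hki => ?_, fun h => he.ext_of_mul_mul fun i k => ?_⟩
  · rw [← h, he.mul_upperTriangularPart_mul, if_neg hki.not_ge]
  · rw [he.mul_upperTriangularPart_mul]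
    split_ifs with hik
    · rfl
    · exact (h i k (not_le.1 hik)).symm

lemma range_upperTriangularPart :
    Set.range (upperTriangularPart e) = {a | ∀ i k, k < i → e i * a * e k = 0} := by
  ext a
  refine ⟨?_, fun ha => ⟨a, (he.upperTriangularPart_eq_self_iff).2 ha⟩⟩
  rintro ⟨b, rfl⟩
  exact (he.upperTriangularPart_eq_self_iff).1 (he.upperTriangularPart_idem b)

lemma upperTriangularPart_eq_zero_iff {a : R} :
    upperTriangularPart e a = 0 ↔ ∀ i k, i ≤ k → e i * a * e k = 0 := by
  refine ⟨fun h i k hik => ?_, fun h => he.ext_of_mul_mul fun i k => ?_⟩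
  · have hblock := he.mul_upperTriangularPart_mul a i k
    rwa [h, mul_zero, zero_mul, if_pos hik, eq_comm] at hblock
  · rw [he.mul_upperTriangularPart_mul, mul_zero, zero_mul]
    split_ifs with hik
    · exact h i k hik
    · rfl

lemma upperTriangularPart_one : upperTriangularPart e 1 = 1 :=
  he.ext_of_mul_mul fun i k => by
    rw [he.mul_upperTriangularPart_mul]
    split_ifs with hik
    · rfl
    · rw [mul_one, he.ortho (ne_of_gt (not_le.1 hik))]

end CompleteOrthogonalIdempotents

end UpperTriangularPart

section IdempotentChain

variable {A : Type*} [Ring A] {n : ℕ} {p : ℕ → A}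

def IsIdempotentChain (n : ℕ) (p : ℕ → A) : Prop :=
  ∀ j ∈ Finset.Icc 0 (n + 1), ∀ k ∈ Finset.Icc 0 (n + 1), p j * p k = p (min j k)

def chainDiff (p : ℕ → A) (n : ℕ) (i : Fin (n + 1)) : A := p ((i : ℕ) + 1) - p i

lemma IsIdempotentChain.mul_eq_min (hp : IsIdempotentChain n p) {j k : ℕ} (hj : j ≤ n + 1)
    (hk : k ≤ n + 1) :
    p j * p k = p (min j k) :=
  hp j (Finset.mem_Icc.2 ⟨j.zero_le, hj⟩) k (Finset.mem_Icc.2 ⟨k.zero_le, hk⟩)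

lemma chainDiff_mul (hp : IsIdempotentChain n p) (i : Fin (n + 1)) {k : ℕ} (hk : k ≤ n + 1) :
    chainDiff p n i * p k = if (i : ℕ) < k then chainDiff p n i else 0 := by
  have hi := i.isLt
  rw [chainDiff, sub_mul, hp.mul_eq_min (by omega) hk, hp.mul_eq_min (by omega) hk]
  split_ifs with hik
  · rw [min_eq_left (by omega), min_eq_left (by omega)]
  · rw [min_eq_right (by omega), min_eq_right (by omega), sub_self]

lemma sum_chainDiff_lt (h0 : p 0 = 0) {j : ℕ} (hj : j ≤ n + 1) :
    ∑ k : Fin (n + 1) with k.val < j, chainDiff p n k = p j := by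
  have hrange : (Finset.range (n + 1)).filter (· < j) = Finset.range j := by
    ext; simp only [Finset.mem_filter, Finset.mem_range]; omega
  rw [Finset.sum_filter]
  unfold chainDiff
  rw [Fin.sum_univ_eq_sum_range (fun k => if k < j then p (k + 1) - p k else 0),
    ← Finset.sum_filter, hrange, Finset.sum_range_sub, h0, sub_zero]

lemma sum_chainDiff (h0 : p 0 = 0) (h1 : p (n + 1) = 1) : ∑ k, chainDiff p n k = 1 := by
  rw [← h1, ← sum_chainDiff_lt h0 le_rfl, Finset.filter_true_of_mem fun k _ => k.isLt]

lemma sum_chainDiff_ge (h0 : p 0 = 0) (h1 : p (n + 1) = 1) {j : ℕ} (hj : j ≤ n + 1) :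
    ∑ k : Fin (n + 1) with j ≤ k.val, chainDiff p n k = 1 - p j := by
  rw [← sum_chainDiff h0 h1, ← sum_chainDiff_lt h0 hj,
    ← Finset.sum_filter_add_sum_filter_not Finset.univ (fun k : Fin (n + 1) => (k : ℕ) < j),
    add_sub_cancel_left]
  simp only [not_lt]

lemma completeOrthogonalIdempotents_chainDiff (h0 : p 0 = 0) (h1 : p (n + 1) = 1)
    (hp : IsIdempotentChain n p) :
    CompleteOrthogonalIdempotents (chainDiff p n) := by
  refine CompleteOrthogonalIdempotents.iff_ortho_complete.2
    ⟨fun i k hik => ?_, sum_chainDiff h0 h1⟩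
  have hik' : (i : ℕ) ≠ k := Fin.val_injective.ne hik
  have hk := k.isLt
  show chainDiff p n i * chainDiff p n k = 0
  rw [show chainDiff p n k = p ((k : ℕ) + 1) - p k from rfl, mul_sub,
    chainDiff_mul hp i (by omega), chainDiff_mul hp i (by omega)]
  split_ifs <;> first | omega | simp only [sub_self]

lemma edel_eq_upperTriangularPart (h0 : p 0 = 0) (h1 : p (n + 1) = 1)
    (hp : IsIdempotentChain n p) :
    Edel n p = upperTriangularPart (chainDiff p n) := by
  funext a
  rw [Edel, ← Finset.Ico_add_one_right_eq_Icc, Finset.sum_Ico_eq_sum_range,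
    ← Fin.sum_univ_eq_sum_range
      (fun i => (1 - p (1 + i - 1)) * p (1 + i) * a * (1 - p (1 + i - 1)))]
  refine Finset.sum_congr rfl fun i _ => ?_
  have hi := i.isLt
  have hdiff : (1 - p i) * p ((i : ℕ) + 1) = chainDiff p n i := by
    rw [sub_mul, one_mul, hp.mul_eq_min (by omega) (by omega), min_eq_left (by omega)]; rfl
  rw [show 1 + (i : ℕ) - 1 = i by omega, add_comm 1, hdiff, ← sum_chainDiff_ge h0 h1 (by omega),
    Finset.mul_sum, Finset.sum_filter]
  simp only [Fin.le_def]

lemma forall_one_sub_mul_mul_eq_zero_iff (h0 : p 0 = 0) (h1 : p (n + 1) = 1)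
    (hp : IsIdempotentChain n p) {a : A} :
    (∀ j ∈ Finset.Icc 1 n, (1 - p j) * a * p j = 0) ↔
      ∀ i k, k < i → chainDiff p n i * a * chainDiff p n k = 0 := by
  have he := (completeOrthogonalIdempotents_chainDiff h0 h1 hp).toOrthogonalIdempotents
  have hblocks : ∀ j ≤ n + 1, (1 - p j) * a * p j = 0 ↔
      ∀ i : Fin (n + 1), j ≤ i.val → ∀ k : Fin (n + 1), k.val < j →
        chainDiff p n i * a * chainDiff p n k = 0 := by
    intro j hj
    rw [← sum_chainDiff_ge h0 h1 hj, ← sum_chainDiff_lt h0 hj, he.sum_mul_mul_sum_eq_zero_iff]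
    simp only [Finset.mem_filter, Finset.mem_univ, true_and]
  constructor
  · intro h i k hki
    rw [Fin.lt_def] at hki
    exact (hblocks i (by omega)).1 (h i (Finset.mem_Icc.2 ⟨by omega, by omega⟩)) i le_rfl k hki
  · intro h j hj
    rw [Finset.mem_Icc] at hj
    exact (hblocks j (by omega)).2 fun i hi k hk => h i k (Fin.lt_def.2 (by omega))

lemma forall_mul_mul_one_sub_eq_zero_iff (h0 : p 0 = 0) (h1 : p (n + 1) = 1)
    (hp : IsIdempotentChain n p) {a : A} :
    (∀ j ∈ Finset.Icc 1 (n + 1), p j * a * (1 - p (j - 1)) = 0) ↔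
      ∀ i k, i ≤ k → chainDiff p n i * a * chainDiff p n k = 0 := by
  have he := (completeOrthogonalIdempotents_chainDiff h0 h1 hp).toOrthogonalIdempotents
  have hblocks : ∀ j ≤ n + 1, p j * a * (1 - p (j - 1)) = 0 ↔
      ∀ i : Fin (n + 1), i.val < j → ∀ k : Fin (n + 1), j - 1 ≤ k.val →
        chainDiff p n i * a * chainDiff p n k = 0 := by
    intro j hj
    rw [← sum_chainDiff_ge h0 h1 (by omega), ← sum_chainDiff_lt h0 hj,
      he.sum_mul_mul_sum_eq_zero_iff]
    simp only [Finset.mem_filter, Finset.mem_univ, true_and]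
  constructor
  · intro h i k hik
    have hi := i.isLt
    rw [Fin.le_def] at hik
    exact (hblocks (i + 1) (by omega)).1 (h (i + 1) (Finset.mem_Icc.2 ⟨by omega, by omega⟩))
      i (by omega) k (by omega)
  · intro h j hj
    rw [Finset.mem_Icc] at hj
    exact (hblocks j hj.2).2 fun i hi k hk => h i k (Fin.le_def.2 (by omega))

end IdempotentChain

/-- `E_δ` is a linear idempotent map from `A` onto `Δ(δ)` with kernel `TN(δ̂)`,
and `E_δ(1) = 1`. -/
theorem stmt11 {A : Type*} [Ring A] (n : ℕ) (p : ℕ → A)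
    (h0 : p 0 = 0) (h1 : p (n + 1) = 1)
    (hp : ∀ j ∈ Finset.Icc 0 (n + 1), ∀ k ∈ Finset.Icc 0 (n + 1),
      p j * p k = p (min j k)) :
    (∀ a b : A, Edel n p (a + b) = Edel n p a + Edel n p b) ∧
    (∀ a : A, Edel n p (Edel n p a) = Edel n p a) ∧
    Set.range (Edel n p) = {a : A | ∀ j ∈ Finset.Icc 1 n, (1 - p j) * a * p j = 0} ∧
    {a : A | Edel n p a = 0}
      = {a : A | ∀ j ∈ Finset.Icc 1 (n + 1), p j * a * (1 - p (j - 1)) = 0} ∧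
    Edel n p (1 : A) = 1 := by
  have he := completeOrthogonalIdempotents_chainDiff h0 h1 hp
  rw [edel_eq_upperTriangularPart h0 h1 hp, he.range_upperTriangularPart]
  refine ⟨upperTriangularPart_add _, he.upperTriangularPart_idem, ?_, ?_,
    he.upperTriangularPart_one⟩
  · ext a
    exact (forall_one_sub_mul_mul_eq_zero_iff h0 h1 hp).symm
  · ext a
    exact he.upperTriangularPart_eq_zero_iff.trans
      (forall_mul_mul_one_sub_eq_zero_iff h0 h1 hp).symm
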